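/- Let x_1 < … < x_n with nondecreasing data f_1 ≤ … ≤ f_n such that m_i > 0 for all 1 ≤ i ≤ n−1, and suppose there exists K > 0 with ĥ/h_j ≤ K for all 1 ≤ j ≤ n−1. For 2 ≤ i ≤ n−1 define the Aràndiga–Yáñez value ḟ_i^{AY} = (h_i + h_{i−1})^{1/p_i}·m_{i−1}·m_i/(h_{i−1}·m_{i−1}^{p_i} + h_i·m_i^{p_i})^{1/p_i}, where p_i = max(1, log(w_i)/log(3)) and w_i = 2·max(h_{i−1}, h_i)/min(h_{i−1}, h_i). Then: (a) 0 < ḟ_i^{AY} and ḟ_i^{AY} ≤ 3·min(m_{i−1}, m_i) for every 2 ≤ i ≤ n−1, so for every 2 ≤ i ≤ n−2 the cubic Hermite interpolant on [x_i, x_{i+1}] of (f_i, ḟ_i^{AY}), (f_{i+1}, ḟ_{i+1}^{AY}) is nondecreasing; (b) if the data come from a function f that is three times continuously differentiable on [x_1, x_n] with f'(x) ≥ δ > 0 there, then the interpolant is third-order accurate: there is a constant C depending only on K, δ and bounds of the derivatives of f such that |ḟ_i^{AY} − f'(x_i)| ≤ C·ĥ² for 2 ≤ i ≤ n−1 and sup_{x∈[x_i,x_{i+1}]}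 |P_i(x) − f(x)| ≤ C·ĥ³ for 2 ≤ i ≤ n−2. -/

import Mathlib

/-!
Write `a = mᵢ₋₁`, `b = mᵢ`, `p = pᵢ` and `θ = hᵢ₋₁ / (hᵢ₋₁ + hᵢ)`. Then `ḟᵢ^{AY} = a b / W` with
`W = (θ aᵖ + (1 - θ) bᵖ)^{1/p}` a weighted power mean of the two slopes.

(a) Dropping one term of `W` and using `(hᵢ₋₁ + hᵢ) / hᵢ ≤ wᵢ ≤ 3ᵖ`, which is what the choice of
`pᵢ` guarantees, gives `ḟᵢ^{AY} ≤ 3 a`, and symmetrically `≤ 3 b`. A cubic Hermite interpolant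
whose end slopes lie in `[0, 3 mᵢ]` is monotone (the Fritsch–Carlson box).

(b) By Taylor's theorem `a = f' - hᵢ₋₁ f'' / 2 + O(h²)` and `b = f' + hᵢ f'' / 2 + O(h²)` at `xᵢ`,
so for the arithmetic mean `A = θ a + (1 - θ) b` the first-order terms cancel in `a b - f' A`,
which is `O(h²)`. Moreover `0 ≤ W - A = O((a - b)² / min(a, b)) = O(h²)`, uniformly in
`p ≤ P(K)` since `wᵢ ≤ 2K`. As `f' ≥ δ`, dividing by `W` gives `ḟᵢ^{AY} = f'(xᵢ) + O(h²)`, and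
`O(h²)` errors in the end slopes cost `O(h³)` in the Hermite interpolant.
-/

/-- The cubic Hermite interpolant on `[xi, xip]` of the data
`(fi, di)`, `(fip, dip)`. -/
noncomputable def hermite (xi xip fi fip di dip : ℝ) : ℝ → ℝ := fun t =>
  fi + di * (t - xi)
    + (((fip - fi) / (xip - xi) - di) / (xip - xi)) * (t - xi) ^ 2
    + ((dip + di - 2 * ((fip - fi) / (xip - xi))) / (xip - xi) ^ 2)
        * (t - xi) ^ 2 * (t - xip)

/-- The exponent `pᵢ = max(1, log wᵢ / log 3)` with
`wᵢ = 2·max(hᵢ₋₁, hᵢ)/min(hᵢ₋₁, hᵢ)`. -/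
noncomputable def ayExp (hm hi : ℝ) : ℝ :=
  max 1 (Real.log (2 * max hm hi / min hm hi) / Real.log 3)

/-- The Aràndiga–Yáñez derivative value
`ḟᵢ^{AY} = (hᵢ + hᵢ₋₁)^{1/pᵢ}·mᵢ₋₁·mᵢ/(hᵢ₋₁·mᵢ₋₁^{pᵢ} + hᵢ·mᵢ^{pᵢ})^{1/pᵢ}`
(for positive divided differences). -/
noncomputable def ayVal (hm hi mm mi : ℝ) : ℝ :=
  (hi + hm) ^ (1 / ayExp hm hi) * mm * mi /
    (hm * mm ^ ayExp hm hi + hi * mi ^ ayExp hm hi) ^ (1 / ayExp hm hi)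

lemma one_le_ayExp (hm hi : ℝ) : 1 ≤ ayExp hm hi := le_max_left _ _

lemma ayExp_pos (hm hi : ℝ) : 0 < ayExp hm hi := one_pos.trans_le (one_le_ayExp hm hi)

lemma ayExp_comm (hm hi : ℝ) : ayExp hm hi = ayExp hi hm := by
  rw [ayExp, ayExp, max_comm hm, min_comm hm]

lemma ayVal_comm (hm hi a b : ℝ) : ayVal hm hi a b = ayVal hi hm b a := by
  rw [ayVal, ayVal, ← ayExp_comm, add_comm hi, add_comm (hm * _), mul_right_comm _ a]

lemma le_three_rpow_ayExp {hm hi : ℝ} (hm0 : 0 < hm) (hi0 : 0 < hi) :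
    2 * max hm hi / min hm hi ≤ 3 ^ ayExp hm hi := by
  have hw : 0 < 2 * max hm hi / min hm hi :=
    div_pos (mul_pos two_pos (lt_max_of_lt_left hm0)) (lt_min hm0 hi0)
  rw [← Real.exp_log hw, Real.rpow_def_of_pos three_pos, Real.exp_le_exp, mul_comm (Real.log 3),
    ← div_le_iff₀ (Real.log_pos (by norm_num))]
  exact le_max_right _ _

lemma add_div_le_three_rpow_ayExp {hm hi : ℝ} (hm0 : 0 < hm) (hi0 : 0 < hi) :
    (hm + hi) / hi ≤ 3 ^ ayExp hm hi := by
  refine le_trans ?_ (le_three_rpow_ayExp hm0 hi0)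
  rw [div_le_div_iff₀ hi0 (lt_min hm0 hi0)]
  nlinarith [le_max_left hm hi, le_max_right hm hi, min_le_right hm hi, lt_min hm0 hi0]

lemma ayVal_pos {hm hi a b : ℝ} (hm0 : 0 < hm) (hi0 : 0 < hi) (ha : 0 < a) (hb : 0 < b) :
    0 < ayVal hm hi a b := by
  unfold ayVal
  positivity

lemma ayVal_le_three_mul_left {hm hi a b : ℝ} (hm0 : 0 < hm) (hi0 : 0 < hi) (ha : 0 < a)
    (hb : 0 < b) : ayVal hm hi a b ≤ 3 * a := by
  set p := ayExp hm hi
  have hp : 0 < p := ayExp_pos hm hi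
  set D := hm * a ^ p + hi * b ^ p
  have hD : hi * b ^ p ≤ D := le_add_of_nonneg_left (by positivity)
  have hquot : (hi + hm) / D ≤ (3 / b) ^ p := by
    rw [Real.div_rpow zero_le_three hb.le, div_le_div_iff₀ (by positivity) (by positivity)]
    calc (hi + hm) * b ^ p = (hm + hi) / hi * (hi * b ^ p) := by field_simp; ring
      _ ≤ 3 ^ p * D := by
        gcongr
        exact add_div_le_three_rpow_ayExp hm0 hi0
  have hroot : ((hi + hm) / D) ^ (1 / p) ≤ 3 / b := by
    rw [one_div, Real.rpow_inv_le_iff_of_pos (by positivity) (by positivity) hp]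
    exact hquot
  calc ayVal hm hi a b = ((hi + hm) / D) ^ (1 / p) * a * b := by
        rw [ayVal, Real.div_rpow (by positivity) (by positivity)]
        ring
    _ ≤ 3 / b * a * b := by gcongr
    _ = 3 * a := by field_simp

lemma ayVal_le_three_mul_min {hm hi a b : ℝ} (hm0 : 0 < hm) (hi0 : 0 < hi) (ha : 0 < a)
    (hb : 0 < b) : ayVal hm hi a b ≤ 3 * min a b := by
  rcases min_choice a b with h | h <;> rw [h]
  · exact ayVal_le_three_mul_left hm0 hi0 ha hb
  · rw [ayVal_comm]
    exact ayVal_le_three_mul_left hi0 hm0 hb ha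

lemma ayExp_le_of_div_le {hm hi H K : ℝ} (hm0 : 0 < hm) (hi0 : 0 < hi) (hmH : hm ≤ H)
    (hiH : hi ≤ H) (hHm : H / hm ≤ K) (hHi : H / hi ≤ K) :
    ayExp hm hi ≤ max 1 (Real.log (2 * K) / Real.log 3) := by
  have hmin : 0 < min hm hi := lt_min hm0 hi0
  have hw : 2 * max hm hi / min hm hi ≤ 2 * K := by
    rw [div_le_iff₀ hm0] at hHm
    rw [div_le_iff₀ hi0] at hHi
    rw [div_le_iff₀ hmin]
    rcases min_choice hm hi with h | h <;> rw [h] <;> linarith [max_le hmH hiH]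
  refine max_le_max le_rfl (div_le_div_of_nonneg_right (Real.log_le_log ?_ hw)
    (Real.log_nonneg (by norm_num)))
  exact div_pos (mul_pos two_pos (lt_max_of_lt_left hm0)) hmin

lemma hermite_hasDerivAt (xi xip fi fip di dip t : ℝ) :
    HasDerivAt (hermite xi xip fi fip di dip)
      (di + (((fip - fi) / (xip - xi) - di) / (xip - xi)) * (2 * (t - xi))
        + ((dip + di - 2 * ((fip - fi) / (xip - xi))) / (xip - xi) ^ 2)
            * (2 * (t - xi) * (t - xip) + (t - xi) ^ 2)) t := by
  have hσ : HasDerivAt (fun t : ℝ => t - xi) 1 t := (hasDerivAt_id' t).sub_const xi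
  have hσ2 : HasDerivAt (fun t : ℝ => (t - xi) ^ 2) (2 * (t - xi)) t :=
    (hσ.pow 2).congr_deriv (by ring)
  have hcubic : HasDerivAt (fun t : ℝ => (t - xi) ^ 2 * (t - xip))
      (2 * (t - xi) * (t - xip) + (t - xi) ^ 2) t :=
    (hσ2.mul ((hasDerivAt_id' t).sub_const xip)).congr_deriv (by ring)
  have := (((hσ.const_mul di).const_add fi).add
    (hσ2.const_mul (((fip - fi) / (xip - xi) - di) / (xip - xi)))).add
    (hcubic.const_mul ((dip + di - 2 * ((fip - fi) / (xip - xi))) / (xip - xi) ^ 2))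
  refine (this.congr_deriv (by ring)).congr_of_eventuallyEq (.of_forall fun y => ?_)
  simp only [hermite, Pi.add_apply]
  ring

/-- The right-hand side is `h²` times the derivative at `xi + σ` of the Hermite cubic on
`[xi, xi + h]` with secant slope `m` and end slopes `d₀, d₁`. -/
lemma hermite_deriv_numerator_nonneg {h σ m d₀ d₁ : ℝ} (hσ0 : 0 ≤ σ) (hσh : σ ≤ h)
    (hm : 0 < m) (hd₀ : 0 ≤ d₀) (hd₁ : 0 ≤ d₁) (hd₀m : d₀ ≤ 3 * m) (hd₁m : d₁ ≤ 3 * m) :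
    0 ≤ d₀ * (h - σ) * (h - 3 * σ) + d₁ * σ * (3 * σ - 2 * h) + 6 * m * σ * (h - σ) := by
  rcases le_total σ (h / 3) with hσ1 | hσ1
  · nlinarith [mul_nonneg (mul_nonneg (sub_nonneg.2 hd₁m) hσ0)
        (by linarith : (0:ℝ) ≤ 2 * h - 3 * σ),
      mul_nonneg (mul_nonneg hd₀ (sub_nonneg.2 hσh)) (by linarith : (0:ℝ) ≤ h - 3 * σ),
      mul_nonneg hm.le (sq_nonneg σ)]
  rcases le_total σ (2 * h / 3) with hσ2 | hσ2
  · nlinarith [mul_nonneg (mul_nonneg (sub_nonneg.2 hd₁m) hσ0)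
        (by linarith : (0:ℝ) ≤ 2 * h - 3 * σ),
      mul_nonneg (mul_nonneg (sub_nonneg.2 hd₀m) (sub_nonneg.2 hσh))
        (by linarith : (0:ℝ) ≤ 3 * σ - h),
      mul_nonneg hm.le (sq_nonneg (h - 2 * σ))]
  · nlinarith [mul_nonneg (mul_nonneg hd₁ hσ0) (by linarith : (0:ℝ) ≤ 3 * σ - 2 * h),
      mul_nonneg (mul_nonneg (sub_nonneg.2 hd₀m) (sub_nonneg.2 hσh))
        (by linarith : (0:ℝ) ≤ 3 * σ - h),
      mul_nonneg hm.le (sq_nonneg (h - σ))]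

lemma hermite_monotoneOn {xi xip fi fip di dip : ℝ} (hx : xi < xip)
    (hm : 0 < (fip - fi) / (xip - xi)) (hdi : 0 ≤ di) (hdip : 0 ≤ dip)
    (hdim : di ≤ 3 * ((fip - fi) / (xip - xi))) (hdipm : dip ≤ 3 * ((fip - fi) / (xip - xi))) :
    MonotoneOn (hermite xi xip fi fip di dip) (Set.Icc xi xip) := by
  have hh : 0 < xip - xi := sub_pos.2 hx
  refine monotoneOn_of_hasDerivWithinAt_nonneg (convex_Icc xi xip)
    (fun t _ => (hermite_hasDerivAt xi xip fi fip di dip t).continuousAt.continuousWithinAt)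
    (fun t _ => (hermite_hasDerivAt xi xip fi fip di dip t).hasDerivWithinAt) ?_
  intro t ht
  rw [interior_Icc] at ht
  set m := (fip - fi) / (xip - xi)
  have hnum := hermite_deriv_numerator_nonneg (h := xip - xi) (σ := t - xi)
    (sub_nonneg.2 ht.1.le) (by linarith [ht.2]) hm hdi hdip hdim hdipm
  have hderiv : di + (m - di) / (xip - xi) * (2 * (t - xi))
        + (dip + di - 2 * m) / (xip - xi) ^ 2 * (2 * (t - xi) * (t - xip) + (t - xi) ^ 2)
      = (di * (xip - xi - (t - xi)) * (xip - xi - 3 * (t - xi))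
          + dip * (t - xi) * (3 * (t - xi) - 2 * (xip - xi))
          + 6 * m * (t - xi) * (xip - xi - (t - xi))) / (xip - xi) ^ 2 := by
    field_simp
    ring
  rw [hderiv]
  exact div_nonneg hnum (sq_nonneg _)

lemma ContDiffOn.hasDerivWithinAt_iteratedDerivWithin {f : ℝ → ℝ} {s : Set ℝ}
    {n : WithTop ℕ∞} {k : ℕ} (hf : ContDiffOn ℝ n f s) (hs : UniqueDiffOn ℝ s) (hk : k < n)
    {t : ℝ} (ht : t ∈ s) :
    HasDerivWithinAt (iteratedDerivWithin k f s) (iteratedDerivWithin (k + 1) f s t) s t := by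
  rw [iteratedDerivWithin_succ]
  exact (hf.differentiableOn_iteratedDerivWithin hk hs t ht).hasDerivWithinAt

section Taylor

variable {s : Set ℝ} {f f₁ f₂ f₃ : ℝ → ℝ} {M u t : ℝ}

lemma Convex.abs_sub_le_mul_abs_pow_succ (hs : Convex ℝ s) {φ φ' : ℝ → ℝ}
    (hφ : ∀ r ∈ s, HasDerivWithinAt φ (φ' r) s r) {k : ℕ} (hM : 0 ≤ M)
    (hφ' : ∀ r ∈ s, |φ' r| ≤ M * |r - u| ^ k) (hu : u ∈ s) (ht : t ∈ s) :
    |φ t - φ u| ≤ M * |t - u| ^ (k + 1) := by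
  have hsub : s ∩ Set.uIcc u t ⊆ s := Set.inter_subset_left
  have key := (hs.inter (convex_uIcc u t)).norm_image_sub_le_of_norm_hasDerivWithin_le
    (fun r hr => (hφ r hr.1).mono hsub) (C := M * |t - u| ^ k) (fun r hr => ?_)
    ⟨hu, Set.left_mem_uIcc⟩ ⟨ht, Set.right_mem_uIcc⟩
  · simpa only [Real.norm_eq_abs, pow_succ, mul_assoc] using key
  · rw [Real.norm_eq_abs]
    exact (hφ' r hr.1).trans (mul_le_mul_of_nonneg_left
      (pow_le_pow_left₀ (abs_nonneg _) (Set.abs_sub_left_of_mem_uIcc hr.2) k) hM)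

variable (hs : Convex ℝ s) (hf : ∀ r ∈ s, HasDerivWithinAt f (f₁ r) s r)
  (hf₁ : ∀ r ∈ s, HasDerivWithinAt f₁ (f₂ r) s r) (hM : 0 ≤ M)
include hs hf hf₁ hM

lemma Convex.abs_taylor₁_sub_le (hf₂M : ∀ r ∈ s, |f₂ r| ≤ M) (hu : u ∈ s) (ht : t ∈ s) :
    |f t - f u - f₁ u * (t - u)| ≤ M * |t - u| ^ 2 := by
  have h₁ : ∀ r ∈ s, |f₁ r - f₁ u| ≤ M * |r - u| ^ 1 := fun r hr => by
    simpa using hs.abs_sub_le_mul_abs_pow_succ hf₁ (k := 0) hM (by simpa using hf₂M) hu hr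
  have := hs.abs_sub_le_mul_abs_pow_succ (φ := fun r => f r - f₁ u * r)
    (fun r hr => ((hf r hr).sub ((hasDerivAt_id' r).hasDerivWithinAt.const_mul _)).congr_deriv
      (by ring)) hM h₁ hu ht
  convert this using 2
  ring

lemma Convex.abs_taylor₂_sub_le (hf₂ : ∀ r ∈ s, HasDerivWithinAt f₂ (f₃ r) s r)
    (hf₃M : ∀ r ∈ s, |f₃ r| ≤ M) (hu : u ∈ s) (ht : t ∈ s) :
    |f t - f u - f₁ u * (t - u) - f₂ u * (t - u) ^ 2 / 2| ≤ M * |t - u| ^ 3 := by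
  have hsq : ∀ r, HasDerivWithinAt (fun r => f₂ u * (r - u) ^ 2 / 2) (f₂ u * (r - u)) s r :=
    fun r => ((((hasDerivAt_id' r).hasDerivWithinAt.sub_const u).pow 2).const_mul (f₂ u)).div_const
      2 |>.congr_deriv (by ring)
  have := hs.abs_sub_le_mul_abs_pow_succ
    (φ := fun r => f r - f₁ u * r - f₂ u * (r - u) ^ 2 / 2)
    (fun r hr => (((hf r hr).sub ((hasDerivAt_id' r).hasDerivWithinAt.const_mul _)).sub (hsq r)))
    (k := 2) hM (fun r hr => ?_) hu ht
  · convert this using 2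
    ring
  · have := hs.abs_taylor₁_sub_le hf₁ hf₂ hM hf₃M hu hr
    convert this using 2
    ring

lemma Convex.abs_slope_sub_le (hf₂M : ∀ r ∈ s, |f₂ r| ≤ M) (hu : u ∈ s) (ht : t ∈ s)
    (htu : t ≠ u) : |(f t - f u) / (t - u) - f₁ u| ≤ M * |t - u| := by
  have hpos : 0 < |t - u| := abs_pos.2 (sub_ne_zero.2 htu)
  have key : (f t - f u) / (t - u) - f₁ u = (f t - f u - f₁ u * (t - u)) / (t - u) := by
    field_simp [sub_ne_zero.2 htu]
  rw [key, abs_div, div_le_iff₀ hpos, mul_assoc, ← sq]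
  exact hs.abs_taylor₁_sub_le hf hf₁ hM hf₂M hu ht

lemma Convex.abs_slope_sub_taylor_le (hf₂ : ∀ r ∈ s, HasDerivWithinAt f₂ (f₃ r) s r)
    (hf₃M : ∀ r ∈ s, |f₃ r| ≤ M) (hu : u ∈ s) (ht : t ∈ s) (htu : t ≠ u) :
    |(f t - f u) / (t - u) - f₁ u - f₂ u * (t - u) / 2| ≤ M * (t - u) ^ 2 := by
  have hpos : 0 < |t - u| := abs_pos.2 (sub_ne_zero.2 htu)
  have key : (f t - f u) / (t - u) - f₁ u - f₂ u * (t - u) / 2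
      = (f t - f u - f₁ u * (t - u) - f₂ u * (t - u) ^ 2 / 2) / (t - u) := by
    field_simp [sub_ne_zero.2 htu]
  rw [key, abs_div, div_le_iff₀ hpos]
  refine (hs.abs_taylor₂_sub_le hf hf₁ hM hf₂ hf₃M hu ht).trans_eq ?_
  rw [pow_succ, sq_abs, mul_assoc]

end Taylor

lemma Convex.le_slope_of_le_hasDerivWithinAt {s : Set ℝ} (hs : Convex ℝ s) {f f₁ : ℝ → ℝ}
    {δ u v : ℝ} (hf : ∀ r ∈ s, HasDerivWithinAt f (f₁ r) s r) (hδ : ∀ r ∈ s, δ ≤ f₁ r)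
    (hu : u ∈ s) (hv : v ∈ s) (huv : u < v) : δ ≤ (f v - f u) / (v - u) := by
  have hg : ∀ r ∈ s, HasDerivWithinAt (fun r => f r - δ * r) (f₁ r - δ) s r := fun r hr =>
    ((hf r hr).sub ((hasDerivAt_id' r).hasDerivWithinAt.const_mul δ)).congr_deriv (by ring)
  have hmono := monotoneOn_of_hasDerivWithinAt_nonneg hs
    (fun r hr => (hg r hr).continuousWithinAt)
    (fun r hr => (hg r (interior_subset hr)).mono interior_subset)
    (fun r hr => sub_nonneg.2 (hδ r (interior_subset hr))) hu hv huv.le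
  rw [le_div_iff₀ (sub_pos.2 huv)]
  linarith

section PowerMean

noncomputable def powerMean (p θ a b : ℝ) : ℝ := (θ * a ^ p + (1 - θ) * b ^ p) ^ (1 / p)

variable {p θ a b : ℝ}

lemma ayVal_eq_div_powerMean {hm hi : ℝ} (hm0 : 0 < hm) (hi0 : 0 < hi) (ha : 0 < a)
    (hb : 0 < b) : ayVal hm hi a b = a * b / powerMean (ayExp hm hi) (hm / (hm + hi)) a b := by
  have hS : 0 < hm + hi := add_pos hm0 hi0
  have hθ : 1 - hm / (hm + hi) = hi / (hm + hi) := by field_simp; ring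
  have hsum : hm * a ^ ayExp hm hi + hi * b ^ ayExp hm hi
      = (hm + hi) * (hm / (hm + hi) * a ^ ayExp hm hi + hi / (hm + hi) * b ^ ayExp hm hi) := by
    field_simp
  rw [ayVal, powerMean, hθ, hsum, Real.mul_rpow hS.le (by positivity), add_comm hi hm]
  have : 0 < (hm + hi) ^ (1 / ayExp hm hi) := by positivity
  field_simp

lemma le_powerMean (hp : 1 ≤ p) (hθ₀ : 0 ≤ θ) (hθ₁ : θ ≤ 1) (ha : 0 ≤ a) (hb : 0 ≤ b) :
    θ * a + (1 - θ) * b ≤ powerMean p θ a b := by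
  simpa [Fin.sum_univ_two, powerMean] using Real.arith_mean_le_rpow_mean Finset.univ ![θ, 1 - θ]
    ![a, b] (by intro i _; fin_cases i <;> simp [hθ₀, hθ₁]) (by simp [Fin.sum_univ_two])
    (by intro i _; fin_cases i <;> simp [ha, hb]) hp

lemma powerMean_le_max (hp : 0 < p) (hθ₀ : 0 ≤ θ) (hθ₁ : θ ≤ 1) (ha : 0 ≤ a) (hb : 0 ≤ b) :
    powerMean p θ a b ≤ max a b := by
  have hmax : 0 ≤ max a b := le_max_of_le_left ha
  rw [powerMean, one_div, Real.rpow_inv_le_iff_of_pos (by positivity) hmax hp]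
  have h₁ : a ^ p ≤ max a b ^ p := by gcongr; exact le_max_left a b
  have h₂ : b ^ p ≤ max a b ^ p := by gcongr; exact le_max_right a b
  nlinarith

-- `4 P² 2ᴾ` bounds `p (p - 1) (1 + r) ^ (p - 2)` for `1 ≤ p ≤ P` and `|r| ≤ 1 / 2`.
lemma one_add_rpow_le {P y : ℝ} (hp : 1 ≤ p) (hpP : p ≤ P) (hy : |y| ≤ 1 / 2) :
    (1 + y) ^ p ≤ 1 + p * y + 4 * P ^ 2 * 2 ^ P * y ^ 2 := by
  set s := Set.Icc (-(1 / 2) : ℝ) (1 / 2)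
  have hpos : ∀ r ∈ s, 0 < 1 + r := fun r hr => by linarith [hr.1]
  have hderiv : ∀ q : ℝ, ∀ r ∈ s,
      HasDerivWithinAt (fun r => (1 + r) ^ q) (q * (1 + r) ^ (q - 1)) s r := fun q r hr =>
    (((hasDerivAt_id' r).const_add 1).rpow_const (Or.inl (hpos r hr).ne')).hasDerivWithinAt
      |>.congr_deriv (by ring)
  have hbound : ∀ r ∈ s, |p * ((p - 1) * (1 + r) ^ (p - 1 - 1))| ≤ 4 * P ^ 2 * 2 ^ P := by
    intro r hr
    have h1r := hpos r hr
    have hpow : (1 + r) ^ (p - 1 - 1) ≤ 4 * 2 ^ P := by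
      rw [show p - 1 - 1 = p - 2 by ring, Real.rpow_sub h1r, Real.rpow_two,
        div_le_iff₀ (by positivity)]
      have h2 : (1 + r) ^ p ≤ 2 ^ P := calc
        (1 + r) ^ p ≤ 2 ^ p := by gcongr; linarith [hr.2]
        _ ≤ 2 ^ P := Real.rpow_le_rpow_of_exponent_le one_le_two hpP
      have hsq : 1 / 4 ≤ (1 + r) ^ 2 := by nlinarith [hr.1]
      nlinarith [mul_le_mul_of_nonneg_left hsq (by positivity : (0 : ℝ) ≤ 2 ^ P)]
    rw [abs_of_nonneg (by positivity), ← mul_assoc, mul_comm 4, mul_assoc (P ^ 2)]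
    gcongr
    nlinarith
  have hy' : y ∈ s := ⟨by linarith [neg_abs_le y], by linarith [le_abs_self y]⟩
  have := (convex_Icc _ _).abs_taylor₁_sub_le (hderiv p)
    (fun r hr => (hderiv (p - 1) r hr).const_mul p) (by positivity) hbound (u := 0)
    ⟨by norm_num, by norm_num⟩ hy'
  simp only [add_zero, Real.one_rpow, mul_one, sub_zero, sq_abs] at this
  linarith [le_abs_self ((1 + y) ^ p - 1 - p * y)]

lemma powerMean_le_add_sq_div_of_abs_sub_le {Q : ℝ} (hp : 1 ≤ p) (hθ₀ : 0 ≤ θ) (hθ₁ : θ ≤ 1)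
    (ha : 0 < a) (hb : 0 < b) (hQ₀ : 0 ≤ Q)
    (hQ : ∀ y, |y| ≤ 1 / 2 → (1 + y) ^ p ≤ 1 + p * y + Q * y ^ 2)
    (hab : |a - b| ≤ min a b / 2) :
    powerMean p θ a b ≤ θ * a + (1 - θ) * b + Q * (a - b) ^ 2 / (θ * a + (1 - θ) * b) := by
  set A := θ * a + (1 - θ) * b
  have hminA : min a b ≤ A := by nlinarith [min_le_left a b, min_le_right a b]
  have hA : 0 < A := (lt_min ha hb).trans_le hminA
  set D := (a - b) / A
  have hD : |D| ≤ 1 / 2 := by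
    rw [abs_div, abs_of_pos hA, div_le_iff₀ hA]
    linarith
  have hya : |(1 - θ) * D| ≤ 1 / 2 := by
    rw [abs_mul, abs_of_nonneg (by linarith)]
    nlinarith [abs_nonneg D]
  have hyb : |-(θ * D)| ≤ 1 / 2 := by
    rw [abs_neg, abs_mul, abs_of_nonneg hθ₀]
    nlinarith [abs_nonneg D]
  have haA : a = A * (1 + (1 - θ) * D) := by
    simp only [D]; field_simp; simp only [A]; ring
  have hbA : b = A * (1 + -(θ * D)) := by
    simp only [D]; field_simp; simp only [A]; ring
  -- the first-order terms of `hQ` cancel: `θ ((1 - θ) D) + (1 - θ) (-(θ D)) = 0`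
  have hmix : θ * (1 + (1 - θ) * D) ^ p + (1 - θ) * (1 + -(θ * D)) ^ p ≤ 1 + Q * D ^ 2 := by
    have h₁ := mul_le_mul_of_nonneg_left (hQ _ hya) hθ₀
    have h₂ := mul_le_mul_of_nonneg_left (hQ _ hyb) (sub_nonneg.2 hθ₁)
    have h₃ : θ * (1 - θ) * Q * D ^ 2 ≤ Q * D ^ 2 := by
      have : θ * (1 - θ) ≤ 1 := by nlinarith
      nlinarith [mul_nonneg hQ₀ (sq_nonneg D)]
    nlinarith
  have h1QD : 1 ≤ 1 + Q * D ^ 2 := le_add_of_nonneg_right (by positivity)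
  calc powerMean p θ a b ≤ A * (1 + Q * D ^ 2) := by
        rw [powerMean, one_div, Real.rpow_inv_le_iff_of_pos (by positivity) (by positivity)
          (one_pos.trans_le hp), Real.mul_rpow hA.le (by positivity)]
        conv_lhs => rw [haA, hbA, Real.mul_rpow hA.le (by linarith [abs_le.1 hya]),
          Real.mul_rpow hA.le (by linarith [abs_le.1 hyb])]
        calc θ * (A ^ p * (1 + (1 - θ) * D) ^ p) + (1 - θ) * (A ^ p * (1 + -(θ * D)) ^ p)
            = A ^ p * (θ * (1 + (1 - θ) * D) ^ p + (1 - θ) * (1 + -(θ * D)) ^ p) := by ring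
          _ ≤ A ^ p * (1 + Q * D ^ 2) := by gcongr
          _ ≤ A ^ p * (1 + Q * D ^ 2) ^ p := by gcongr; exact Real.self_le_rpow_of_one_le h1QD hp
    _ = A + Q * (a - b) ^ 2 / A := by simp only [D]; field_simp

lemma powerMean_le_add_sq_div_min {Q : ℝ} (hp : 1 ≤ p) (hθ₀ : 0 ≤ θ) (hθ₁ : θ ≤ 1)
    (ha : 0 < a) (hb : 0 < b) (hQ₀ : 0 ≤ Q)
    (hQ : ∀ y, |y| ≤ 1 / 2 → (1 + y) ^ p ≤ 1 + p * y + Q * y ^ 2) :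
    powerMean p θ a b ≤ θ * a + (1 - θ) * b + (Q + 2) * (a - b) ^ 2 / min a b := by
  have hmin : 0 < min a b := lt_min ha hb
  have hminA : min a b ≤ θ * a + (1 - θ) * b := by
    nlinarith [min_le_left a b, min_le_right a b]
  rcases le_or_gt |a - b| (min a b / 2) with hsmall | hlarge
  · refine (powerMean_le_add_sq_div_of_abs_sub_le hp hθ₀ hθ₁ ha hb hQ₀ hQ hsmall).trans ?_
    gcongr
    linarith
  · have hmax : max a b ≤ θ * a + (1 - θ) * b + |a - b| := by
      have : max a b - min a b = |a - b| := max_sub_min_eq_abs' a b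
      linarith
    have habs : |a - b| ≤ 2 * (a - b) ^ 2 / min a b := by
      rw [le_div_iff₀ hmin, ← sq_abs]
      nlinarith [abs_nonneg (a - b)]
    have h2 : 2 * (a - b) ^ 2 / min a b ≤ (Q + 2) * (a - b) ^ 2 / min a b := by
      gcongr; linarith
    linarith [powerMean_le_max (one_pos.trans_le hp) hθ₀ hθ₁ ha.le hb.le]

end PowerMean

lemma ayVal_mem_Icc {hm hi a b : ℝ} (hm0 : 0 < hm) (hi0 : 0 < hi) (ha : 0 < a) (hb : 0 < b) :
    ayVal hm hi a b ∈ Set.Icc (min a b) (max a b) := by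
  have hθ₀ : 0 ≤ hm / (hm + hi) := by positivity
  have hθ₁ : hm / (hm + hi) ≤ 1 := div_le_one_of_le₀ (by linarith) (by positivity)
  set W := powerMean (ayExp hm hi) (hm / (hm + hi)) a b
  have hminW : min a b ≤ W := le_trans (by nlinarith [min_le_left a b, min_le_right a b])
    (le_powerMean (one_le_ayExp hm hi) hθ₀ hθ₁ ha.le hb.le)
  have hWmax : W ≤ max a b := powerMean_le_max (ayExp_pos hm hi) hθ₀ hθ₁ ha.le hb.le
  have hmin : 0 < min a b := lt_min ha hb
  rw [ayVal_eq_div_powerMean hm0 hi0 ha hb, ← min_mul_max a b]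
  constructor
  · rw [le_div_iff₀ (hmin.trans_le hminW)]
    gcongr
  · rw [div_le_iff₀ (hmin.trans_le hminW), mul_comm]
    gcongr

lemma abs_mul_sub_mul_weighted_le {hm hi a b F c M : ℝ} (hm0 : 0 < hm) (hi0 : 0 < hi)
    (hF : 0 ≤ F) (ha₁ : |a - F| ≤ M * hm) (hb₁ : |b - F| ≤ M * hi)
    (ha₂ : |a - F + hm / 2 * c| ≤ M * hm ^ 2) (hb₂ : |b - F - hi / 2 * c| ≤ M * hi ^ 2) :
    |a * b - F * (hm / (hm + hi) * a + (1 - hm / (hm + hi)) * b)|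
      ≤ (F * M + M ^ 2) * (hm * hi) := by
  have hS : 0 < hm + hi := add_pos hm0 hi0
  have hid : a * b - F * (hm / (hm + hi) * a + (1 - hm / (hm + hi)) * b)
      = F * ((hi * (a - F + hm / 2 * c) + hm * (b - F - hi / 2 * c)) / (hm + hi))
        + (a - F) * (b - F) := by
    field_simp
    ring
  have hlin : |hi * (a - F + hm / 2 * c) + hm * (b - F - hi / 2 * c)|
      ≤ M * (hm * hi) * (hm + hi) := calc
    _ ≤ hi * |a - F + hm / 2 * c| + hm * |b - F - hi / 2 * c| := by
      refine (abs_add_le _ _).trans_eq ?_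
      rw [abs_mul, abs_mul, abs_of_pos hi0, abs_of_pos hm0]
    _ ≤ hi * (M * hm ^ 2) + hm * (M * hi ^ 2) := by gcongr
    _ = M * (hm * hi) * (hm + hi) := by ring
  rw [hid]
  calc _ ≤ F * (|hi * (a - F + hm / 2 * c) + hm * (b - F - hi / 2 * c)| / (hm + hi))
        + |a - F| * |b - F| := by
        refine (abs_add_le _ _).trans_eq ?_
        rw [abs_mul, abs_mul, abs_div, abs_of_nonneg hF, abs_of_pos hS]
    _ ≤ F * (M * (hm * hi) * (hm + hi) / (hm + hi)) + M * hm * (M * hi) := by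
        gcongr
        exact (abs_nonneg _).trans ha₁
    _ = (F * M + M ^ 2) * (hm * hi) := by field_simp

lemma abs_ayVal_sub_le_of_abs_sub_le {hm hi a b F ε : ℝ} (hm0 : 0 < hm) (hi0 : 0 < hi)
    (ha : 0 < a) (hb : 0 < b) (haF : |a - F| ≤ ε) (hbF : |b - F| ≤ ε) :
    |ayVal hm hi a b - F| ≤ ε := by
  have hmem := ayVal_mem_Icc hm0 hi0 ha hb
  have hmin : F - ε ≤ min a b := le_min (by linarith [abs_le.1 haF]) (by linarith [abs_le.1 hbF])
  have hmax : max a b ≤ F + ε := max_le (by linarith [abs_le.1 haF]) (by linarith [abs_le.1 hbF])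
  exact abs_le.2 ⟨by linarith [hmem.1], by linarith [hmem.2]⟩

lemma abs_ayVal_sub_le_of_four_mul_le {hm hi a b F c M δ H Q : ℝ} (hm0 : 0 < hm)
    (hi0 : 0 < hi) (hmH : hm ≤ H) (hiH : hi ≤ H) (hδ : 0 < δ) (hM : 0 ≤ M) (hQ₀ : 0 ≤ Q)
    (hFδ : δ ≤ F) (haδ : δ ≤ a) (hbδ : δ ≤ b) (hF : 4 * M * H ≤ F)
    (ha₁ : |a - F| ≤ M * hm) (hb₁ : |b - F| ≤ M * hi)
    (ha₂ : |a - F + hm / 2 * c| ≤ M * hm ^ 2) (hb₂ : |b - F - hi / 2 * c| ≤ M * hi ^ 2)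
    (hQ : ∀ y, |y| ≤ 1 / 2 → (1 + y) ^ ayExp hm hi ≤ 1 + ayExp hm hi * y + Q * y ^ 2) :
    |ayVal hm hi a b - F| ≤ (2 * M + (1 + 6 * (Q + 2)) * M ^ 2 / δ) * H ^ 2 := by
  have ha : 0 < a := hδ.trans_le haδ
  have hb : 0 < b := hδ.trans_le hbδ
  have hF₀ : 0 < F := hδ.trans_le hFδ
  have haH := abs_le.1 (ha₁.trans (mul_le_mul_of_nonneg_left hmH hM))
  have hbH := abs_le.1 (hb₁.trans (mul_le_mul_of_nonneg_left hiH hM))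
  set θ := hm / (hm + hi)
  set A := θ * a + (1 - θ) * b
  set W := powerMean (ayExp hm hi) θ a b
  have hθ₀ : 0 ≤ θ := by positivity
  have hθ₁ : θ ≤ 1 := div_le_one_of_le₀ (by linarith) (by positivity)
  have hminA : min a b ≤ A := by nlinarith [min_le_left a b, min_le_right a b]
  have hAW : A ≤ W := le_powerMean (one_le_ayExp hm hi) hθ₀ hθ₁ ha.le hb.le
  have hWA : W ≤ A + (Q + 2) * (a - b) ^ 2 / min a b :=
    powerMean_le_add_sq_div_min (one_le_ayExp hm hi) hθ₀ hθ₁ ha hb hQ₀ hQ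
  have hmin : 3 / 4 * F ≤ min a b := le_min (by linarith) (by linarith)
  have hδW : δ ≤ W := (le_min haδ hbδ).trans (hminA.trans hAW)
  have hFW : 3 / 4 * F ≤ W := hmin.trans (hminA.trans hAW)
  have hW : 0 < W := hδ.trans_le hδW
  have hAF : |a * b - F * A| ≤ (F * M + M ^ 2) * H ^ 2 := by
    refine (abs_mul_sub_mul_weighted_le hm0 hi0 hF₀.le ha₁ hb₁ ha₂ hb₂).trans ?_
    gcongr
    exact (mul_le_mul hmH hiH hi0.le (hm0.le.trans hmH)).trans_eq (sq H).symm
  have hgap : F * ((Q + 2) * (a - b) ^ 2 / min a b) ≤ 16 / 3 * (Q + 2) * M ^ 2 * H ^ 2 := by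
    have hab : (a - b) ^ 2 ≤ 4 * M ^ 2 * H ^ 2 := by nlinarith
    calc F * ((Q + 2) * (a - b) ^ 2 / min a b)
        ≤ F * ((Q + 2) * (4 * M ^ 2 * H ^ 2) / (3 / 4 * F)) := by gcongr
      _ = 16 / 3 * (Q + 2) * M ^ 2 * H ^ 2 := by field_simp; ring
  have hnum : |a * b - F * W| ≤ F * M * H ^ 2 + (1 + 16 / 3 * (Q + 2)) * M ^ 2 * H ^ 2 := by
    calc |a * b - F * W| ≤ |a * b - F * A| + F * (W - A) := by
          rw [show a * b - F * W = (a * b - F * A) - F * (W - A) by ring]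
          refine (abs_sub _ _).trans_eq ?_
          rw [abs_of_nonneg (mul_nonneg hF₀.le (by linarith))]
      _ ≤ F * M * H ^ 2 + (1 + 16 / 3 * (Q + 2)) * M ^ 2 * H ^ 2 := by nlinarith
  rw [ayVal_eq_div_powerMean hm0 hi0 ha hb, div_sub' hW.ne', mul_comm W F, abs_div, abs_of_pos hW]
  calc |a * b - F * W| / W
      ≤ F * M * H ^ 2 / W + (1 + 16 / 3 * (Q + 2)) * M ^ 2 * H ^ 2 / W := by
        rw [← add_div]
        gcongr
    _ ≤ F * M * H ^ 2 / (3 / 4 * F) + (1 + 16 / 3 * (Q + 2)) * M ^ 2 * H ^ 2 / δ := by gcongr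
    _ = (4 / 3 * M + (1 + 16 / 3 * (Q + 2)) * M ^ 2 / δ) * H ^ 2 := by field_simp
    _ ≤ (2 * M + (1 + 6 * (Q + 2)) * M ^ 2 / δ) * H ^ 2 := by
        have hQ₂ : 0 ≤ Q + 2 := by linarith
        gcongr <;> norm_num

lemma abs_ayVal_sub_le_of_slope_bounds {hm hi a b F c M δ H Q : ℝ} (hm0 : 0 < hm)
    (hi0 : 0 < hi) (hmH : hm ≤ H) (hiH : hi ≤ H) (hδ : 0 < δ) (hM : 0 ≤ M) (hQ₀ : 0 ≤ Q)
    (hFδ : δ ≤ F) (haδ : δ ≤ a) (hbδ : δ ≤ b)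
    (ha₁ : |a - F| ≤ M * hm) (hb₁ : |b - F| ≤ M * hi)
    (ha₂ : |a - F + hm / 2 * c| ≤ M * hm ^ 2) (hb₂ : |b - F - hi / 2 * c| ≤ M * hi ^ 2)
    (hQ : ∀ y, |y| ≤ 1 / 2 → (1 + y) ^ ayExp hm hi ≤ 1 + ayExp hm hi * y + Q * y ^ 2) :
    |ayVal hm hi a b - F| ≤ (2 * M + (1 + 6 * (Q + 2)) * M ^ 2 / δ) * H ^ 2 := by
  rcases le_total (4 * M * H) F with hfine | hcoarse
  · exact abs_ayVal_sub_le_of_four_mul_le hm0 hi0 hmH hiH hδ hM hQ₀ hFδ haδ hbδ hfine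
      ha₁ hb₁ ha₂ hb₂ hQ
  -- here `δ ≤ 4 M H`, so the first-order bound `M H` is already `O(H² / δ)`
  have hH : 0 ≤ H := hm0.le.trans hmH
  calc |ayVal hm hi a b - F| ≤ M * H :=
        abs_ayVal_sub_le_of_abs_sub_le hm0 hi0 (hδ.trans_le haδ) (hδ.trans_le hbδ)
          (ha₁.trans (by gcongr)) (hb₁.trans (by gcongr))
    _ ≤ 4 * M ^ 2 / δ * H ^ 2 := by
        rw [div_mul_eq_mul_div, le_div_iff₀ hδ]
        nlinarith [mul_le_mul_of_nonneg_left (hFδ.trans hcoarse) (mul_nonneg hM hH)]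
    _ ≤ (2 * M + (1 + 6 * (Q + 2)) * M ^ 2 / δ) * H ^ 2 := by
        have : 4 * M ^ 2 / δ ≤ (1 + 6 * (Q + 2)) * M ^ 2 / δ := by gcongr; linarith
        gcongr
        linarith

lemma abs_cubic_le_sum_abs {τ : ℝ} (hτ₀ : 0 ≤ τ) (hτ₁ : τ ≤ 1) (α β γ : ℝ) :
    |α * τ + β * τ ^ 2 + γ * (τ ^ 2 * (τ - 1))| ≤ |α| + |β| + |γ| := by
  have h₁ : |τ| ≤ 1 := abs_le.2 ⟨by linarith, hτ₁⟩
  have h₂ : |τ ^ 2| ≤ 1 := by rw [abs_pow]; exact pow_le_one₀ (abs_nonneg τ) h₁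
  have h₃ : |τ ^ 2| * |τ - 1| ≤ 1 :=
    mul_le_one₀ h₂ (abs_nonneg _) (abs_le.2 ⟨by linarith, by linarith⟩)
  calc _ ≤ |α * τ| + |β * τ ^ 2| + |γ * (τ ^ 2 * (τ - 1))| := abs_add_three _ _ _
    _ ≤ |α| * 1 + |β| * 1 + |γ| * 1 := by
      simp only [abs_mul]
      gcongr
    _ = |α| + |β| + |γ| := by ring

lemma abs_hermite_sub_le_of_taylor {xi xip t fi fip ft di dip Fi Fip c M E H : ℝ} (hx : xi < xip)
    (ht : t ∈ Set.Icc xi xip) (hH : xip - xi ≤ H) (hM : 0 ≤ M)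
    (hG : |ft - fi - Fi * (t - xi) - c * (t - xi) ^ 2 / 2| ≤ M * (xip - xi) ^ 3)
    (hr : |(fip - fi) / (xip - xi) - Fi - c * (xip - xi) / 2| ≤ M * (xip - xi) ^ 2)
    (hρ : |Fip - Fi - c * (xip - xi)| ≤ M * (xip - xi) ^ 2)
    (hdi : |di - Fi| ≤ E * H ^ 2) (hdip : |dip - Fip| ≤ E * H ^ 2) :
    |hermite xi xip fi fip di dip t - ft| ≤ (5 * M + 4 * E) * H ^ 3 := by
  set h := xip - xi
  have hh : 0 < h := sub_pos.2 hx
  set τ := (t - xi) / h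
  have hτ₀ : 0 ≤ τ := div_nonneg (sub_nonneg.2 ht.1) hh.le
  have hτ₁ : τ ≤ 1 := (div_le_one hh).2 (by linarith [ht.2])
  set e₀ := di - Fi
  set e₁ := dip - Fip
  set r := (fip - fi) / h - Fi - c * h / 2
  set ρ := Fip - Fi - c * h
  set G := ft - fi - Fi * (t - xi) - c * (t - xi) ^ 2 / 2
  have hid : hermite xi xip fi fip di dip t - ft
      = h * (e₀ * τ + (r - e₀) * τ ^ 2 + (ρ + e₀ + e₁ - 2 * r) * (τ ^ 2 * (τ - 1))) - G := by
    have hne : xip - xi ≠ 0 := hh.ne'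
    simp only [hermite, h, τ, e₀, e₁, r, ρ, G]
    field_simp
    ring
  have hH₀ : 0 ≤ H := hh.le.trans hH
  have hhH : h ^ 2 ≤ H ^ 2 := pow_le_pow_left₀ hh.le hH 2
  have hr' : |r| ≤ M * H ^ 2 := hr.trans (by gcongr)
  have hρ' : |ρ| ≤ M * H ^ 2 := hρ.trans (by gcongr)
  have hG' : |G| ≤ M * H ^ 3 := hG.trans (by gcongr)
  have hsum : |e₀| + |r - e₀| + |ρ + e₀ + e₁ - 2 * r| ≤ 4 * (M + E) * H ^ 2 := by
    have := abs_sub r e₀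
    have := abs_sub (ρ + e₀ + e₁) (2 * r)
    have := abs_add_three ρ e₀ e₁
    rw [abs_mul, abs_two] at *
    linarith
  rw [hid]
  calc _ ≤ h * (|e₀| + |r - e₀| + |ρ + e₀ + e₁ - 2 * r|) + |G| := by
        refine (abs_sub _ _).trans ?_
        rw [abs_mul, abs_of_pos hh]
        gcongr
        exact abs_cubic_le_sum_abs hτ₀ hτ₁ _ _ _
    _ ≤ H * (4 * (M + E) * H ^ 2) + M * H ^ 3 := by gcongr
    _ = (5 * M + 4 * E) * H ^ 3 := by ring

section Interpolation

variable {s : Set ℝ} {f f₁ f₂ f₃ : ℝ → ℝ} {M : ℝ}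
  (hs : Convex ℝ s) (hf : ∀ r ∈ s, HasDerivWithinAt f (f₁ r) s r)
  (hf₁ : ∀ r ∈ s, HasDerivWithinAt f₁ (f₂ r) s r) (hf₂ : ∀ r ∈ s, HasDerivWithinAt f₂ (f₃ r) s r)
  (hM : 0 ≤ M) (hf₃M : ∀ r ∈ s, |f₃ r| ≤ M)
include hs hf hf₁ hf₂ hM hf₃M

lemma Convex.abs_ayVal_slope_sub_deriv_le {δ H P v u w : ℝ} (hf₂M : ∀ r ∈ s, |f₂ r| ≤ M)
    (hδ : 0 < δ) (hf₁δ : ∀ r ∈ s, δ ≤ f₁ r) (hv : v ∈ s) (hu : u ∈ s) (hw : w ∈ s)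
    (hvu : v < u) (huw : u < w) (hvH : u - v ≤ H) (hwH : w - u ≤ H)
    (hP : ayExp (u - v) (w - u) ≤ P) :
    |ayVal (u - v) (w - u) ((f u - f v) / (u - v)) ((f w - f u) / (w - u)) - f₁ u|
      ≤ (2 * M + (1 + 6 * (4 * P ^ 2 * 2 ^ P + 2)) * M ^ 2 / δ) * H ^ 2 := by
  have hslope : (f u - f v) / (u - v) = (f v - f u) / (v - u) := by
    rw [← neg_sub (f v), ← neg_sub v, neg_div_neg_eq]
  have hvu' : |v - u| = u - v := by rw [abs_sub_comm, abs_of_pos (sub_pos.2 hvu)]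
  have hwu' : |w - u| = w - u := abs_of_pos (sub_pos.2 huw)
  refine abs_ayVal_sub_le_of_slope_bounds (c := f₂ u) (sub_pos.2 hvu) (sub_pos.2 huw) hvH hwH
    hδ hM (by positivity) (hf₁δ u hu) (hs.le_slope_of_le_hasDerivWithinAt hf hf₁δ hv hu hvu)
    (hs.le_slope_of_le_hasDerivWithinAt hf hf₁δ hu hw huw) ?_ ?_ ?_ ?_
    fun y hy => one_add_rpow_le (one_le_ayExp _ _) hP hy
  · rw [hslope]
    exact (hs.abs_slope_sub_le hf hf₁ hM hf₂M hu hv hvu.ne).trans_eq (by rw [hvu'])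
  · exact (hs.abs_slope_sub_le hf hf₁ hM hf₂M hu hw huw.ne').trans_eq (by rw [hwu'])
  · rw [hslope]
    convert hs.abs_slope_sub_taylor_le hf hf₁ hM hf₂ hf₃M hu hv hvu.ne using 2 <;> ring
  · convert hs.abs_slope_sub_taylor_le hf hf₁ hM hf₂ hf₃M hu hw huw.ne' using 2; ring

lemma Convex.abs_hermite_sub_le {E H xi xip di dip t : ℝ} (hxi : xi ∈ s) (hxip : xip ∈ s)
    (hx : xi < xip) (hH : xip - xi ≤ H) (hdi : |di - f₁ xi| ≤ E * H ^ 2)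
    (hdip : |dip - f₁ xip| ≤ E * H ^ 2) (ht : t ∈ Set.Icc xi xip) :
    |hermite xi xip (f xi) (f xip) di dip t - f t| ≤ (5 * M + 4 * E) * H ^ 3 := by
  have hts : t ∈ s := hs.ordConnected.out hxi hxip ht
  have hG := hs.abs_taylor₂_sub_le hf hf₁ hM hf₂ hf₃M hxi hts
  rw [abs_of_nonneg (sub_nonneg.2 ht.1)] at hG
  have hρ := hs.abs_taylor₁_sub_le hf₁ hf₂ hM hf₃M hxi hxip
  rw [abs_of_pos (sub_pos.2 hx)] at hρ
  refine abs_hermite_sub_le_of_taylor hx ht hH hM (hG.trans ?_)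
    (hs.abs_slope_sub_taylor_le hf hf₁ hM hf₂ hf₃M hxi hxip hx.ne') hρ hdi hdip
  have : t - xi ≤ xip - xi := by linarith [ht.2]
  gcongr
  exact sub_nonneg.2 ht.1

end Interpolation

lemma mem_Icc_of_forall_lt_succ {n k : ℕ} {x : ℕ → ℝ}
    (hx : ∀ i, 1 ≤ i → i ≤ n - 1 → x i < x (i + 1)) (hk : 1 ≤ k) (hkn : k ≤ n) :
    x k ∈ Set.Icc (x 1) (x n) := by
  have hmono : MonotoneOn x (Set.Icc 1 n) :=
    monotoneOn_of_le_succ Set.ordConnected_Icc fun a _ ha hsa => by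
      rw [Order.succ_eq_add_one] at hsa ⊢
      exact (hx a ha.1 (by simp only [Set.mem_Icc] at hsa; omega)).le
  exact ⟨hmono ⟨le_rfl, by omega⟩ ⟨hk, hkn⟩ hk, hmono ⟨hk, hkn⟩ ⟨by omega, le_rfl⟩ hkn⟩

theorem arandigaYanez_monotone {n : ℕ} {x f df : ℕ → ℝ}
    (hx : ∀ i, 1 ≤ i → i ≤ n - 1 → x i < x (i + 1))
    (hm : ∀ i, 1 ≤ i → i ≤ n - 1 → 0 < (f (i + 1) - f i) / (x (i + 1) - x i))
    (hdf : ∀ i, 2 ≤ i → i ≤ n - 1 →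
      df i = ayVal (x i - x (i - 1)) (x (i + 1) - x i)
        ((f i - f (i - 1)) / (x i - x (i - 1))) ((f (i + 1) - f i) / (x (i + 1) - x i))) :
    (∀ i, 2 ≤ i → i ≤ n - 1 →
        0 < df i ∧ df i ≤ 3 * min ((f i - f (i - 1)) / (x i - x (i - 1)))
          ((f (i + 1) - f i) / (x (i + 1) - x i))) ∧
      (∀ i, 2 ≤ i → i ≤ n - 2 →
        MonotoneOn (hermite (x i) (x (i + 1)) (f i) (f (i + 1)) (df i) (df (i + 1)))
          (Set.Icc (x i) (x (i + 1)))) := by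
  have hnode : ∀ i, 2 ≤ i → i ≤ n - 1 →
      0 < df i ∧ df i ≤ 3 * min ((f i - f (i - 1)) / (x i - x (i - 1)))
        ((f (i + 1) - f i) / (x (i + 1) - x i)) := by
    intro i hi hin
    obtain ⟨j, rfl⟩ : ∃ j, i = j + 1 := ⟨i - 1, by omega⟩
    rw [hdf _ hi hin, Nat.add_sub_cancel]
    have hh₁ := sub_pos.2 (hx j (by omega) (by omega))
    have hh₂ := sub_pos.2 (hx (j + 1) (by omega) hin)
    have hm₁ := hm j (by omega) (by omega)
    have hm₂ := hm (j + 1) (by omega) hin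
    exact ⟨ayVal_pos hh₁ hh₂ hm₁ hm₂, ayVal_le_three_mul_min hh₁ hh₂ hm₁ hm₂⟩
  refine ⟨hnode, fun i hi hin => ?_⟩
  obtain ⟨hpos, hle⟩ := hnode i hi (by omega)
  obtain ⟨hpos', hle'⟩ := hnode (i + 1) (by omega) (by omega)
  rw [Nat.add_sub_cancel] at hle'
  exact hermite_monotoneOn (hx i (by omega) (by omega)) (hm i (by omega) (by omega))
    hpos.le hpos'.le (hle.trans (by gcongr; exact min_le_right _ _))
    (hle'.trans (by gcongr; exact min_le_left _ _))

theorem arandigaYanez_accuracy (K : ℝ) {δ M : ℝ} (hδ : 0 < δ) (hM : 0 ≤ M) :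
    ∃ C > 0, ∀ (n : ℕ) (x : ℕ → ℝ) (f : ℝ → ℝ) (hhat : ℝ) (df : ℕ → ℝ), 2 ≤ n →
      (∀ i, 1 ≤ i → i ≤ n - 1 → x i < x (i + 1)) →
      (∀ i, 1 ≤ i → i ≤ n - 1 → x (i + 1) - x i ≤ hhat) →
      (∀ j, 1 ≤ j → j ≤ n - 1 → hhat / (x (j + 1) - x j) ≤ K) →
      ContDiffOn ℝ 3 f (Set.Icc (x 1) (x n)) →
      (∀ t ∈ Set.Icc (x 1) (x n), δ ≤ derivWithin f (Set.Icc (x 1) (x n)) t) →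
      (∀ t ∈ Set.Icc (x 1) (x n), |iteratedDerivWithin 2 f (Set.Icc (x 1) (x n)) t| ≤ M) →
      (∀ t ∈ Set.Icc (x 1) (x n), |iteratedDerivWithin 3 f (Set.Icc (x 1) (x n)) t| ≤ M) →
      (∀ i, 2 ≤ i → i ≤ n - 1 →
        df i = ayVal (x i - x (i - 1)) (x (i + 1) - x i)
          ((f (x i) - f (x (i - 1))) / (x i - x (i - 1)))
          ((f (x (i + 1)) - f (x i)) / (x (i + 1) - x i))) →
      (∀ i, 2 ≤ i → i ≤ n - 1 →
          |df i - derivWithin f (Set.Icc (x 1) (x n)) (x i)| ≤ C * hhat ^ 2) ∧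
        (∀ i, 2 ≤ i → i ≤ n - 2 → ∀ t ∈ Set.Icc (x i) (x (i + 1)),
          |hermite (x i) (x (i + 1)) (f (x i)) (f (x (i + 1))) (df i) (df (i + 1)) t - f t|
            ≤ C * hhat ^ 3) := by
  set P := max 1 (Real.log (2 * K) / Real.log 3)
  set C := 2 * M + (1 + 6 * (4 * P ^ 2 * 2 ^ P + 2)) * M ^ 2 / δ
  have hC : 0 ≤ C := by positivity
  refine ⟨5 * M + 4 * C + 1, by positivity, ?_⟩
  intro n x f hhat df hn hx hxH hKx hf hδf hM₂ hM₃ hdf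
  set s := Set.Icc (x 1) (x n)
  have hxs : ∀ k, 1 ≤ k → k ≤ n → x k ∈ s := fun k => mem_Icc_of_forall_lt_succ hx
  have hs : UniqueDiffOn ℝ s :=
    uniqueDiffOn_Icc ((hx 1 le_rfl (by omega)).trans_le (hxs 2 (by omega) hn).2)
  have hd : ∀ k < 3, ∀ r ∈ s, HasDerivWithinAt (iteratedDerivWithin k f s)
      (iteratedDerivWithin (k + 1) f s r) s r := fun k hk r hr =>
    hf.hasDerivWithinAt_iteratedDerivWithin hs (by exact_mod_cast hk) hr
  have hf₀ : ∀ r ∈ s, HasDerivWithinAt f (iteratedDerivWithin 1 f s r) s r := by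
    simpa using hd 0 (by norm_num)
  rw [← iteratedDerivWithin_one] at hδf ⊢
  have hderiv : ∀ i, 2 ≤ i → i ≤ n - 1 →
      |df i - iteratedDerivWithin 1 f s (x i)| ≤ C * hhat ^ 2 := by
    intro i hi hin
    obtain ⟨j, rfl⟩ : ∃ j, i = j + 1 := ⟨i - 1, by omega⟩
    rw [hdf _ hi hin, Nat.add_sub_cancel]
    have hh₁ := sub_pos.2 (hx j (by omega) (by omega))
    have hh₂ := sub_pos.2 (hx (j + 1) (by omega) hin)
    have hH₁ := hxH j (by omega) (by omega)
    have hH₂ := hxH (j + 1) (by omega) hin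
    exact (convex_Icc _ _).abs_ayVal_slope_sub_deriv_le hf₀ (hd 1 (by norm_num))
      (hd 2 (by norm_num)) hM hM₃ hM₂ hδ hδf (hxs j (by omega) (by omega))
      (hxs (j + 1) (by omega) (by omega)) (hxs (j + 1 + 1) (by omega) (by omega))
      (sub_pos.1 hh₁) (sub_pos.1 hh₂) hH₁ hH₂ (ayExp_le_of_div_le hh₁ hh₂ hH₁ hH₂
        (hKx j (by omega) (by omega)) (hKx (j + 1) (by omega) hin))
  have hhat₀ : 0 ≤ hhat := (sub_pos.2 (hx 1 le_rfl (by omega))).le.trans (hxH 1 le_rfl (by omega))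
  refine ⟨fun i hi hin => (hderiv i hi hin).trans (by gcongr; linarith), fun i hi hin t ht => ?_⟩
  refine ((convex_Icc _ _).abs_hermite_sub_le hf₀ (hd 1 (by norm_num)) (hd 2 (by norm_num)) hM hM₃
    (hxs i (by omega) (by omega)) (hxs (i + 1) (by omega) (by omega)) (hx i (by omega) (by omega))
    (hxH i (by omega) (by omega)) (hderiv i hi (by omega)) (hderiv (i + 1) (by omega) (by omega))
    ht).trans (mul_le_mul_of_nonneg_right (by linarith) (by positivity))

/-- (a) The Aràndiga–Yáñez values satisfy `0 < ḟᵢ^{AY} ≤ 3·min(mᵢ₋₁, mᵢ)` for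
increasing data, so the resulting cubic Hermite interpolant is monotone;
(b) for data sampled from `f ∈ C³` with `f' ≥ δ > 0` and quasi-uniform grids
(`ĥ/hⱼ ≤ K`) the values are second-order accurate approximations of `f'(xᵢ)`
and the resulting piecewise cubic Hermite interpolant is third-order
accurate. -/
theorem arandigaYanez_monotone_and_accuracy :
    (∀ (n : ℕ) (x f df : ℕ → ℝ) (K hhat : ℝ), 4 ≤ n → 0 < K →
      (∀ i, 1 ≤ i → i ≤ n - 1 → x i < x (i + 1)) →
      (∀ i, 1 ≤ i → i ≤ n - 1 → f i ≤ f (i + 1)) →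
      (∀ i, 1 ≤ i → i ≤ n - 1 → 0 < (f (i + 1) - f i) / (x (i + 1) - x i)) →
      (∀ i, 1 ≤ i → i ≤ n - 1 → x (i + 1) - x i ≤ hhat) →
      (∃ i, 1 ≤ i ∧ i ≤ n - 1 ∧ hhat = x (i + 1) - x i) →
      (∀ j, 1 ≤ j → j ≤ n - 1 → hhat / (x (j + 1) - x j) ≤ K) →
      (∀ i, 2 ≤ i → i ≤ n - 1 →
        df i = ayVal (x i - x (i - 1)) (x (i + 1) - x i)
          ((f i - f (i - 1)) / (x i - x (i - 1)))
          ((f (i + 1) - f i) / (x (i + 1) - x i))) →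
      ((∀ i, 2 ≤ i → i ≤ n - 1 →
          0 < df i ∧ df i ≤ 3 * min ((f i - f (i - 1)) / (x i - x (i - 1)))
            ((f (i + 1) - f i) / (x (i + 1) - x i))) ∧
        (∀ i, 2 ≤ i → i ≤ n - 2 →
          MonotoneOn (hermite (x i) (x (i + 1)) (f i) (f (i + 1)) (df i) (df (i + 1)))
            (Set.Icc (x i) (x (i + 1)))))) ∧
    (∀ K δ M : ℝ, 0 < K → 0 < δ → 0 ≤ M →
      ∃ C > 0, ∀ (n : ℕ) (x : ℕ → ℝ) (f : ℝ → ℝ) (hhat : ℝ) (df : ℕ → ℝ),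
        4 ≤ n →
        (∀ i, 1 ≤ i → i ≤ n - 1 → x i < x (i + 1)) →
        (∀ i, 1 ≤ i → i ≤ n - 1 → x (i + 1) - x i ≤ hhat) →
        (∃ i, 1 ≤ i ∧ i ≤ n - 1 ∧ hhat = x (i + 1) - x i) →
        (∀ j, 1 ≤ j → j ≤ n - 1 → hhat / (x (j + 1) - x j) ≤ K) →
        ContDiffOn ℝ 3 f (Set.Icc (x 1) (x n)) →
        (∀ t ∈ Set.Icc (x 1) (x n), δ ≤ derivWithin f (Set.Icc (x 1) (x n)) t) →
        (∀ t ∈ Set.Icc (x 1) (x n),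
          |iteratedDerivWithin 2 f (Set.Icc (x 1) (x n)) t| ≤ M) →
        (∀ t ∈ Set.Icc (x 1) (x n),
          |iteratedDerivWithin 3 f (Set.Icc (x 1) (x n)) t| ≤ M) →
        (∀ i, 2 ≤ i → i ≤ n - 1 →
          df i = ayVal (x i - x (i - 1)) (x (i + 1) - x i)
            ((f (x i) - f (x (i - 1))) / (x i - x (i - 1)))
            ((f (x (i + 1)) - f (x i)) / (x (i + 1) - x i))) →
        ((∀ i, 2 ≤ i → i ≤ n - 1 →
            |df i - derivWithin f (Set.Icc (x 1) (x n)) (x i)| ≤ C * hhat ^ 2) ∧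
          (∀ i, 2 ≤ i → i ≤ n - 2 → ∀ t ∈ Set.Icc (x i) (x (i + 1)),
            |hermite (x i) (x (i + 1)) (f (x i)) (f (x (i + 1))) (df i) (df (i + 1)) t
              - f t| ≤ C * hhat ^ 3))) :=
  ⟨fun _ _ _ _ _ _ _ _ hx _ hm _ _ _ hdf => arandigaYanez_monotone hx hm hdf,
    fun K _ _ _ hδ hM => (arandigaYanez_accuracy K hδ hM).imp fun _ ⟨hC, h⟩ =>
      ⟨hC, fun n x f hhat df hn hx hxH _ hK hf hδf hM₂ hM₃ hdf =>
        h n x f hhat df (by omega) hx hxH hK hf hδf hM₂ hM₃ hdf⟩⟩
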